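/- Let p be a prime with 2^(n-1) ≤ p < 2^n, and let x be an integer with 1 ≤ x < p. Run the Extended Euclidean Algorithm on (p, x) with termination index k and set b_i = ⌊log₂ q_i⌋. Fix an iteration index j with 1 ≤ j ≤ k−1 and a within-iteration position u with 0 < u ≤ 4(b_j + 1), and let the global step index be T = 4·Σ_{i=1}^{j-1}(b_i + 1) + u. Let ℓ_t = ⌊log₂ t_j⌋ + 1, and let ℓ_q = 0 if u ≤ b_j + 1 or u > 3(b_j + 1), ℓ_q = u − (b_j + 1) if b_j + 1 < u ≤ 2(b_j + 1), and ℓ_q = 3(b_j + 1) − u if 2(b_j + 1) < u ≤ 3(b_j + 1). Then ℓ_t + ℓ_q + 1 ≤ ⌊T/2⌋ + 2 and ℓ_t + ℓ_q + 1 ≤ n + 2. -/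

import Mathlib

/-- Remainder sequence of the Extended Euclidean Algorithm on `(p, x)`:
`r 0 = p`, `r 1 = x`, and `r (i+1) = r (i-1) - ⌊r (i-1) / r i⌋ * r i` for `i ≥ 1`. -/
def eeaR (p x : ℕ) : ℕ → ℕ
  | 0 => p
  | 1 => x
  | (i + 2) => eeaR p x i - (eeaR p x i / eeaR p x (i + 1)) * eeaR p x (i + 1)

/-- Quotient sequence `q i = ⌊r (i-1) / r i⌋` of the Extended Euclidean Algorithm. -/
def eeaQ (p x i : ℕ) : ℕ := eeaR p x (i - 1) / eeaR p x i

/-- Cofactor sequence of the Extended Euclidean Algorithm: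
`t 0 = 0`, `t 1 = 1`, and `t (i+1) = t (i-1) + q i * t i` for `i ≥ 1`. -/
def eeaT (p x : ℕ) : ℕ → ℕ
  | 0 => 0
  | 1 => 1
  | (i + 2) => eeaT p x i + eeaQ p x (i + 1) * eeaT p x (i + 1)

/-!
The cofactors obey `t_{i+1} r_i + t_i r_{i+1} = p`, so `q_j t_j ≤ t_{j+1} ≤ p < 2^n` as long as
`r_j ≥ 1`, which gives `⌊log₂ q_j⌋ + ⌊log₂ t_j⌋ < n`. On the other hand
`t_{i+1} ≤ (q_i + 1) t_i ≤ 2^{b_i+1} t_i`, so `⌊log₂ t_j⌋ ≤ S := Σ_{i<j} (b_i + 1)`, while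
`T = 4S + u`. The stored quotient length is at most `b_j + 1` and at most `u / 2`.
-/

section

variable (p x : ℕ)

theorem eeaR_add_two (i : ℕ) : eeaR p x (i + 2) = eeaR p x i % eeaR p x (i + 1) :=
  Nat.mod_eq_sub_div_mul.symm

theorem eeaT_add_two (i : ℕ) :
    eeaT p x (i + 2) = eeaT p x i + eeaQ p x (i + 1) * eeaT p x (i + 1) :=
  rfl

theorem eeaT_mul_eeaR_add_eeaT_mul_eeaR (i : ℕ) :
    eeaT p x (i + 1) * eeaR p x i + eeaT p x i * eeaR p x (i + 1) = p := by
  induction i with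
  | zero => simp [eeaT, eeaR]
  | succ i ih =>
    have hdiv := Nat.div_add_mod (eeaR p x i) (eeaR p x (i + 1))
    rw [eeaR_add_two, eeaT_add_two, eeaQ, Nat.add_sub_cancel]
    nlinarith

variable {p x}

theorem eeaR_succ_lt (hxp : x < p) {i : ℕ} (hi : 0 < eeaR p x i) :
    eeaR p x (i + 1) < eeaR p x i := by
  cases i with
  | zero => exact hxp
  | succ i => rw [eeaR_add_two]; exact Nat.mod_lt _ hi

theorem eeaQ_succ_pos (hxp : x < p) {i : ℕ} (h₀ : 0 < eeaR p x i) (h₁ : 0 < eeaR p x (i + 1)) :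
    0 < eeaQ p x (i + 1) :=
  Nat.div_pos (eeaR_succ_lt hxp h₀).le h₁

theorem eeaT_succ_pos (hxp : x < p) {i : ℕ} (hr : ∀ m ≤ i, 0 < eeaR p x m) :
    0 < eeaT p x (i + 1) := by
  induction i with
  | zero => simp [eeaT]
  | succ i ih =>
    have hq := eeaQ_succ_pos hxp (hr i (by omega)) (hr (i + 1) le_rfl)
    rw [eeaT_add_two]
    have := Nat.mul_pos hq (ih fun m hm => hr m (by omega))
    omega

theorem eeaQ_mul_eeaT_le {j : ℕ} (hr : 0 < eeaR p x j) : eeaQ p x j * eeaT p x j ≤ p := by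
  cases j with
  | zero => simp [eeaT]
  | succ j =>
    have hinv := eeaT_mul_eeaR_add_eeaT_mul_eeaR p x (j + 1)
    rw [eeaT_add_two] at hinv
    nlinarith

variable (p x)

theorem eeaT_le_two_pow_sum (j : ℕ) :
    eeaT p x j ≤ 2 ^ ∑ i ∈ Finset.Icc 1 (j - 1), (Nat.log 2 (eeaQ p x i) + 1) := by
  induction j using Nat.twoStepInduction with
  | zero => simp [eeaT]
  | one => simp [eeaT]
  | more j ih₀ ih₁ =>
    set S := ∑ i ∈ Finset.Icc 1 j, (Nat.log 2 (eeaQ p x i) + 1)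
    have hS : ∑ i ∈ Finset.Icc 1 (j - 1), (Nat.log 2 (eeaQ p x i) + 1) ≤ S :=
      Finset.sum_le_sum_of_subset (Finset.Icc_subset_Icc_right (Nat.sub_le j 1))
    have hq := Nat.lt_pow_succ_log_self (by norm_num : 1 < 2) (eeaQ p x (j + 1))
    have ht₀ : eeaT p x j ≤ 2 ^ S := ih₀.trans (Nat.pow_le_pow_right (by norm_num) hS)
    rw [Nat.add_sub_cancel] at ih₁
    rw [show j + 2 - 1 = j + 1 by omega, Finset.sum_Icc_succ_top (by omega), pow_add, eeaT_add_two]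
    calc eeaT p x j + eeaQ p x (j + 1) * eeaT p x (j + 1)
        ≤ 2 ^ S + eeaQ p x (j + 1) * 2 ^ S := by gcongr
      _ = (eeaQ p x (j + 1) + 1) * 2 ^ S := by ring
      _ ≤ 2 ^ (Nat.log 2 (eeaQ p x (j + 1)) + 1) * 2 ^ S := by gcongr; exact hq
      _ = 2 ^ S * 2 ^ (Nat.log 2 (eeaQ p x (j + 1)) + 1) := mul_comm _ _

end

theorem Nat.log_add_log_lt_of_mul_lt_pow {b m n k : ℕ} (hb : 1 < b) (hm : m ≠ 0) (hn : n ≠ 0)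
    (h : m * n < b ^ k) : Nat.log b m + Nat.log b n < k := by
  have hle : b ^ (Nat.log b m + Nat.log b n) ≤ m * n := by
    rw [pow_add]
    exact Nat.mul_le_mul (Nat.pow_log_le_self b hm) (Nat.pow_log_le_self b hn)
  exact (Nat.pow_lt_pow_iff_right hb).mp (hle.trans_lt h)

theorem storedQuotientLength_le (b u : ℕ) :
    (if u ≤ b + 1 ∨ 3 * (b + 1) < u then 0
      else if u ≤ 2 * (b + 1) then u - (b + 1) else 3 * (b + 1) - u) ≤ min (u / 2) (b + 1) := by
  split_ifs <;> omega

theorem stmt_12_general (n p x : ℕ) (hpub : p < 2 ^ n) (hxp : x < p)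
    (k : ℕ) (hkmin : ∀ m < k, eeaR p x m ≠ 0)
    (j u : ℕ) (hj1 : 1 ≤ j) (hjk : j ≤ k - 1)
    (T : ℕ) (hT : T = 4 * ∑ i ∈ Finset.Icc 1 (j - 1), (Nat.log 2 (eeaQ p x i) + 1) + u)
    (ℓt : ℕ) (hlt : ℓt = Nat.log 2 (eeaT p x j) + 1)
    (ℓq : ℕ)
    (hlq : ℓq =
      if u ≤ Nat.log 2 (eeaQ p x j) + 1 ∨ 3 * (Nat.log 2 (eeaQ p x j) + 1) < u then 0
      else if u ≤ 2 * (Nat.log 2 (eeaQ p x j) + 1) then u - (Nat.log 2 (eeaQ p x j) + 1)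
      else 3 * (Nat.log 2 (eeaQ p x j) + 1) - u) :
    ℓt + ℓq + 1 ≤ T / 2 + 2 ∧ ℓt + ℓq + 1 ≤ n + 2 := by
  have hr : ∀ m ≤ j, 0 < eeaR p x m := fun m hm => Nat.pos_of_ne_zero (hkmin m (by omega))
  obtain ⟨i, rfl⟩ : ∃ i, j = i + 1 := ⟨j - 1, by omega⟩
  have hq := eeaQ_succ_pos hxp (hr i (by omega)) (hr (i + 1) le_rfl)
  have ht := eeaT_succ_pos (i := i) hxp fun m hm => hr m (by omega)
  have hlog : Nat.log 2 (eeaQ p x (i + 1)) + Nat.log 2 (eeaT p x (i + 1)) < n :=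
    Nat.log_add_log_lt_of_mul_lt_pow (by norm_num) hq.ne' ht.ne'
      ((eeaQ_mul_eeaT_le (hr (i + 1) le_rfl)).trans_lt hpub)
  have hlogT := Nat.log_mono_right (b := 2) (eeaT_le_two_pow_sum p x (i + 1))
  rw [Nat.log_pow (by norm_num)] at hlogT
  have hℓq := storedQuotientLength_le (Nat.log 2 (eeaQ p x (i + 1))) u
  rw [← hlq] at hℓq
  omega

/-- With `b_j = ⌊log₂ q_j⌋`, step `T = 4·Σ_{i<j}(b_i+1) + u`
(`0 < u ≤ 4(b_j+1)`), `ℓ_t = ⌊log₂ t_j⌋ + 1` and the piecewise stored quotient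
length `ℓ_q`, one has `ℓ_t + ℓ_q + 1 ≤ ⌊T/2⌋ + 2` and `ℓ_t + ℓ_q + 1 ≤ n + 2`. -/
theorem stmt_12 (n p x : ℕ) (hp : p.Prime)
    (hplb : 2 ^ (n - 1) ≤ p) (hpub : p < 2 ^ n)
    (hx : 1 ≤ x) (hxp : x < p)
    (k : ℕ) (hk : eeaR p x k = 0) (hkmin : ∀ m < k, eeaR p x m ≠ 0)
    (j u : ℕ) (hj1 : 1 ≤ j) (hjk : j ≤ k - 1)
    (hu1 : 0 < u) (hu2 : u ≤ 4 * (Nat.log 2 (eeaQ p x j) + 1))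
    (T : ℕ) (hT : T = 4 * ∑ i ∈ Finset.Icc 1 (j - 1), (Nat.log 2 (eeaQ p x i) + 1) + u)
    (ℓt : ℕ) (hlt : ℓt = Nat.log 2 (eeaT p x j) + 1)
    (ℓq : ℕ)
    (hlq : ℓq =
      if u ≤ Nat.log 2 (eeaQ p x j) + 1 ∨ 3 * (Nat.log 2 (eeaQ p x j) + 1) < u then 0
      else if u ≤ 2 * (Nat.log 2 (eeaQ p x j) + 1) then u - (Nat.log 2 (eeaQ p x j) + 1)
      else 3 * (Nat.log 2 (eeaQ p x j) + 1) - u) :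
    ℓt + ℓq + 1 ≤ T / 2 + 2 ∧ ℓt + ℓq + 1 ≤ n + 2 :=
  stmt_12_general n p x hpub hxp k hkmin j u hj1 hjk T hT ℓt hlt ℓq hlq
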